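/- Let K be a field and let B be a scroll matrix over a polynomial ring S = K[x_1,…,x_n]: B is a 2×N matrix of linear forms consisting of blocks B_1,…,B_r, where block B_i has rows (L_{i,0},…,L_{i,c_i}) and (L_{i,1},…,L_{i,c_i+1}), and all the linear forms L_{i,0},…,L_{i,c_i+1} (over all i = 1,…,r) are linearly independent; the block B_i is called generic if c_i = 0 and non-generic if c_i > 0. Let M be the ideal generated by all 2×2 minors of B, let Δ be a K-subspace of the space of linear forms, and suppose M ⊆ (Δ). Then at least one of the following holds: (1) all blocks of B are generic; (2) all entries of one of the two rows of B lie in Δ; (3) there exists a non-generic block B_i all of whose entries lie in Δ; (4) B has a non-generic block, no entry of any non-generic block of B lies in Δ, and there exists a nonzero constant α ∈ K such that for every non-generic block B_i there is a linear form H_i ∉ Δ with L_{i,j} − α^j H_i ∈ Δ for all j = 0,…,c_i+1, and for every generic block B_i there is a linear form H_i, either zero or not in Δ, with L_{i,0} − H_i ∈ Δ and L_{i,1} − α H_i ∈ Δ. -/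

import Mathlib

/-!
Let `π` be a projection of `S` onto a complement of `Δ`, so that `π f = 0` iff `f ∈ Δ`. The
algebra endomorphism `X_k ↦ π X_k` of `S` agrees with `π` on linear forms, hence kills
`(Δ) ⊇ M`: the projected entries `π L_{i,j}` form a scroll matrix whose `2×2` minors vanish in
the domain `S`. If a non-generic block has projected entries both zero and nonzero, two adjacent
ones, one zero and one not, force a whole row to vanish. Otherwise take a non-generic block
`i₀`: the minor `π L_{i₀,0} π L_{i₀,2} - (π L_{i₀,1})²` makes `π L_{i₀,1}` a multiple
`α π L_{i₀,0}` (a linear functional vanishing on `π L_{i₀,0}` but not on `π L_{i₀,1}` would give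
a point contradicting it), and the minors pairing column `0` of block `i₀` with any column of
block `i` give `π L_{i,j+1} = α π L_{i,j}`. Then `H_i = π L_{i,0}` works.
-/

open MvPolynomial

namespace Submodule

variable {K V : Type*} [Ring K] [AddCommGroup V] [Module K V] {p q : Submodule K V}

theorem projection_apply_mem_of_le {P : Submodule K V} (hpq : IsCompl p q) (hqP : q ≤ P)
    {x : V} (hx : x ∈ P) : p.projection q hpq x ∈ P := by
  rw [← sub_sub_cancel x (p.projection q hpq x)]
  exact P.sub_mem hx (hqP (sub_projection_mem hpq x))

theorem projection_apply_mem_right_iff (hpq : IsCompl p q) (x : V) :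
    p.projection q hpq x ∈ q ↔ p.projection q hpq x = 0 :=
  ⟨fun h => disjoint_def.1 hpq.disjoint _ (projection_apply_mem hpq x) h,
    fun h => h ▸ q.zero_mem⟩

theorem sub_projection_mem_iff (hpq : IsCompl p q) (x y : V) :
    x - p.projection q hpq y ∈ q ↔ p.projection q hpq x = p.projection q hpq y := by
  rw [← projection_apply_eq_zero_iff hpq, map_sub,
    projection_apply_of_mem_left hpq (projection_apply_mem hpq y), sub_eq_zero]

end Submodule

namespace MvPolynomial

variable {σ R A : Type*}

theorem aeval_comp_X_of_isHomogeneous_one [CommSemiring R] [CommSemiring A] [Algebra R A]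
    (f : MvPolynomial σ R →ₗ[R] A) {p : MvPolynomial σ R} (hp : p.IsHomogeneous 1) :
    aeval (fun i => f (X i)) p = f p := by
  have hspan : p ∈ Submodule.span R (Set.range X) := by
    rwa [← homogeneousSubmodule_one_eq_span_X, mem_homogeneousSubmodule]
  refine LinearMap.eqOn_span' (f := (aeval fun i => f (X i)).toLinearMap) ?_ hspan
  rintro _ ⟨i, rfl⟩
  simp

theorem aeval_comp_X_eq_zero_of_mem_span [CommSemiring R] [CommSemiring A] [Algebra R A]
    {Δ : Set (MvPolynomial σ R)} (hΔ : ∀ g ∈ Δ, g.IsHomogeneous 1)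
    (f : MvPolynomial σ R →ₗ[R] A) (hf : ∀ g ∈ Δ, f g = 0) {p : MvPolynomial σ R}
    (hp : p ∈ Ideal.span Δ) : aeval (fun i => f (X i)) p = 0 := by
  refine (Ideal.span_le (I := RingHom.ker (aeval fun i => f (X i)))).2 ?_ hp
  intro g hg
  rw [SetLike.mem_coe, RingHom.mem_ker, aeval_comp_X_of_isHomogeneous_one f (hΔ g hg), hf g hg]

theorem mem_span_singleton_of_mul_eq_mul_self {K : Type*} [Field K] {u v w : MvPolynomial σ K}
    (hu : u.IsHomogeneous 1) (hv : v.IsHomogeneous 1) (h : u * w = v * v) : v ∈ K ∙ u := by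
  by_contra hvu
  obtain ⟨f, hfv, hfu⟩ := Submodule.exists_dual_map_eq_bot_of_notMem hvu inferInstance
  have hu0 : f u = 0 := by
    simpa [hfu] using Submodule.mem_map_of_mem (f := f) (Submodule.mem_span_singleton_self u)
  have h' := congrArg (aeval fun i => f (X i)) h
  rw [map_mul, map_mul, aeval_comp_X_of_isHomogeneous_one f hu,
    aeval_comp_X_of_isHomogeneous_one f hv, hu0, zero_mul] at h'
  exact hfv (mul_self_eq_zero.1 h'.symm)

end MvPolynomial

theorem exists_not_iff_succ {P : ℕ → Prop} {m a b : ℕ} (ha : a ≤ m) (hb : b ≤ m) (hPa : P a)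
    (hPb : ¬ P b) : ∃ k < m, ¬ (P k ↔ P (k + 1)) := by
  by_contra! hconst
  have hP0 : ∀ k ≤ m, (P k ↔ P 0) := by
    intro k hk
    induction k with
    | zero => rfl
    | succ k ih => exact (hconst k (by omega)).symm.trans (ih (by omega))
  exact hPb ((hP0 b hb).2 ((hP0 a ha).1 hPa))

def scrollMinors {R : Type*} [Ring R] (r : ℕ) (c : ℕ → ℕ) (L : ℕ → ℕ → R) : Set R :=
  {f | ∃ i i' j j' : ℕ, i < r ∧ i' < r ∧ j ≤ c i ∧ j' ≤ c i' ∧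
    f = L i j * L i' (j' + 1) - L i (j + 1) * L i' j'}

def ScrollMinorsVanish {R : Type*} [Mul R] (r : ℕ) (c : ℕ → ℕ) (ℓ : ℕ → ℕ → R) : Prop :=
  ∀ i < r, ∀ i' < r, ∀ j ≤ c i, ∀ j' ≤ c i', ℓ i j * ℓ i' (j' + 1) = ℓ i (j + 1) * ℓ i' j'

theorem scrollMinorsVanish_comp_linearMap {σ R A : Type*} [CommRing R] [CommRing A]
    [Algebra R A] {r : ℕ} {c : ℕ → ℕ} {L : ℕ → ℕ → MvPolynomial σ R}
    (hL : ∀ i < r, ∀ j ≤ c i + 1, (L i j).IsHomogeneous 1) {Δ : Set (MvPolynomial σ R)}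
    (hΔ : ∀ g ∈ Δ, g.IsHomogeneous 1) (f : MvPolynomial σ R →ₗ[R] A) (hf : ∀ g ∈ Δ, f g = 0)
    (hLΔ : scrollMinors r c L ⊆ Ideal.span Δ) :
    ScrollMinorsVanish r c (fun i j => f (L i j)) := by
  intro i hi i' hi' j hj j' hj'
  have h := aeval_comp_X_eq_zero_of_mem_span hΔ f hf
    (hLΔ ⟨i, i', j, j', hi, hi', hj, hj', rfl⟩)
  have hf_L : ∀ i < r, ∀ j ≤ c i + 1, aeval (fun k => f (X k)) (L i j) = f (L i j) :=
    fun i hi j hj => aeval_comp_X_of_isHomogeneous_one f (hL i hi j hj)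
  rwa [map_sub, map_mul, map_mul, sub_eq_zero, hf_L i hi j (by omega),
    hf_L i hi (j + 1) (by omega), hf_L i' hi' j' (by omega), hf_L i' hi' (j' + 1) (by omega)] at h

namespace ScrollMinorsVanish

variable {R : Type*} [CommRing R] [IsDomain R] {r : ℕ} {c : ℕ → ℕ} {ℓ : ℕ → ℕ → R}

theorem first_row_eq_zero (h : ScrollMinorsVanish r c ℓ) {i k : ℕ} (hi : i < r) (hk : k ≤ c i)
    (h0 : ℓ i k = 0) (h1 : ℓ i (k + 1) ≠ 0) : ∀ i' < r, ∀ j ≤ c i', ℓ i' j = 0 := by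
  intro i' hi' j hj
  have hminor := h i' hi' i hi j hj k hk
  rw [h0, mul_zero, mul_eq_zero] at hminor
  exact hminor.resolve_right h1

theorem second_row_eq_zero (h : ScrollMinorsVanish r c ℓ) {i k : ℕ} (hi : i < r) (hk : k ≤ c i)
    (h0 : ℓ i k ≠ 0) (h1 : ℓ i (k + 1) = 0) : ∀ i' < r, ∀ j ≤ c i', ℓ i' (j + 1) = 0 := by
  intro i' hi' j hj
  have hminor := h i hi i' hi' k hk j hj
  rw [h1, zero_mul, mul_eq_zero] at hminor
  exact hminor.resolve_left h0

theorem row_eq_zero_of_mixed_block (h : ScrollMinorsVanish r c ℓ) {i a b : ℕ} (hi : i < r)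
    (ha : a ≤ c i + 1) (hb : b ≤ c i + 1) (h0 : ℓ i a = 0) (h1 : ℓ i b ≠ 0) :
    (∀ i' < r, ∀ j ≤ c i', ℓ i' j = 0) ∨
      (∀ i' < r, ∀ j, 1 ≤ j → j ≤ c i' + 1 → ℓ i' j = 0) := by
  obtain ⟨k, hk, hjump⟩ := exists_not_iff_succ (P := fun j => ℓ i j = 0) ha hb h0 h1
  rw [not_iff] at hjump
  by_cases hk0 : ℓ i k = 0
  · exact Or.inl (h.first_row_eq_zero hi (by omega) hk0 fun hk1 => hjump.2 hk1 hk0)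
  · right
    intro i' hi' j hj1 hj
    obtain ⟨j, rfl⟩ := Nat.exists_eq_add_of_le' hj1
    exact h.second_row_eq_zero hi (by omega) hk0 (hjump.1 hk0) i' hi' j (by omega)

theorem eq_pow_smul {K : Type*} [CommSemiring K] [Algebra K R] (h : ScrollMinorsVanish r c ℓ)
    {i₀ : ℕ} (hi₀ : i₀ < r) (h0 : ℓ i₀ 0 ≠ 0) {α : K} (hα : ℓ i₀ 1 = α • ℓ i₀ 0) :
    ∀ i < r, ∀ j ≤ c i + 1, ℓ i j = α ^ j • ℓ i 0 := by
  have hsucc : ∀ i < r, ∀ k ≤ c i, ℓ i (k + 1) = α • ℓ i k := by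
    intro i hi k hk
    apply mul_left_cancel₀ h0
    rw [h i₀ hi₀ i hi 0 (Nat.zero_le _) k hk, hα, smul_mul_assoc, mul_smul_comm]
  intro i hi j hj
  induction j with
  | zero => rw [pow_zero, one_smul]
  | succ k ih => rw [hsucc i hi k (by omega), ih (by omega), smul_smul, pow_succ']

theorem exists_eq_pow_smul {σ K : Type*} [Field K] {ℓ : ℕ → ℕ → MvPolynomial σ K}
    (h : ScrollMinorsVanish r c ℓ) {i₀ : ℕ} (hi₀ : i₀ < r) (hc : 0 < c i₀)
    (hhom₀ : (ℓ i₀ 0).IsHomogeneous 1) (hhom₁ : (ℓ i₀ 1).IsHomogeneous 1)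
    (h0 : ℓ i₀ 0 ≠ 0) (h1 : ℓ i₀ 1 ≠ 0) :
    ∃ α : K, α ≠ 0 ∧ ∀ i < r, ∀ j ≤ c i + 1, ℓ i j = α ^ j • ℓ i 0 := by
  obtain ⟨α, hα⟩ := Submodule.mem_span_singleton.1 <|
    mem_span_singleton_of_mul_eq_mul_self hhom₀ hhom₁ (h i₀ hi₀ i₀ hi₀ 0 (Nat.zero_le _) 1 hc)
  refine ⟨α, fun hα0 => h1 (by rw [← hα, hα0, zero_smul]), h.eq_pow_smul hi₀ h0 hα.symm⟩

end ScrollMinorsVanish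

theorem scroll_matrix_in_linear_ideal_general (K : Type) [Field K] (n r : ℕ)
    (c : ℕ → ℕ) (L : ℕ → ℕ → MvPolynomial (Fin n) K)
    (hhom : ∀ i < r, ∀ j ≤ c i + 1, (L i j).IsHomogeneous 1)
    (M : Ideal (MvPolynomial (Fin n) K))
    (hM : M = Ideal.span {f | ∃ i i' j j' : ℕ, i < r ∧ i' < r ∧ j ≤ c i ∧ j' ≤ c i' ∧
        f = L i j * L i' (j' + 1) - L i (j + 1) * L i' j'})
    (Δ : Submodule K (MvPolynomial (Fin n) K))
    (hΔ : ∀ f ∈ Δ, f.IsHomogeneous 1)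
    (hMΔ : M ≤ Ideal.span (Δ : Set (MvPolynomial (Fin n) K))) :
    (∀ i < r, c i = 0) ∨
    ((∀ i < r, ∀ j ≤ c i, L i j ∈ Δ) ∨ (∀ i < r, ∀ j, 1 ≤ j → j ≤ c i + 1 → L i j ∈ Δ)) ∨
    (∃ i < r, 0 < c i ∧ ∀ j ≤ c i + 1, L i j ∈ Δ) ∨
    ((∃ i < r, 0 < c i) ∧ (∀ i < r, 0 < c i → ∀ j ≤ c i + 1, L i j ∉ Δ) ∧
      ∃ α : K, α ≠ 0 ∧
        (∀ i < r, 0 < c i → ∃ H : MvPolynomial (Fin n) K, H.IsHomogeneous 1 ∧ H ∉ Δ ∧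
          ∀ j ≤ c i + 1, L i j - α ^ j • H ∈ Δ) ∧
        (∀ i < r, c i = 0 → ∃ H : MvPolynomial (Fin n) K, H.IsHomogeneous 1 ∧
          (H = 0 ∨ H ∉ Δ) ∧ L i 0 - H ∈ Δ ∧ L i 1 - α • H ∈ Δ)) := by
  obtain ⟨Q, hQ⟩ : ∃ Q, IsCompl Q Δ := (Submodule.exists_isCompl Δ).imp fun _ h => h.symm
  set π := Q.projection Δ hQ
  have hπ : ∀ f, π f = 0 ↔ f ∈ Δ := fun f => Submodule.projection_apply_eq_zero_iff hQ
  have hπhom : ∀ i < r, ∀ j ≤ c i + 1, (π (L i j)).IsHomogeneous 1 := fun i hi j hj =>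
    Submodule.projection_apply_mem_of_le (P := homogeneousSubmodule _ K 1) hQ hΔ (hhom i hi j hj)
  have hvanish : ScrollMinorsVanish r c (fun i j => π (L i j)) :=
    scrollMinorsVanish_comp_linearMap hhom hΔ π (fun g => (hπ g).2)
      fun _ hg => hMΔ (hM ▸ Ideal.subset_span hg)
  by_cases hgen : ∀ i < r, c i = 0
  · exact Or.inl hgen
  obtain ⟨i₀, hi₀, hc₀⟩ : ∃ i < r, 0 < c i := by push Not at hgen; simpa [Nat.pos_iff_ne_zero]
  by_cases hfull : ∃ i < r, 0 < c i ∧ ∀ j ≤ c i + 1, L i j ∈ Δ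
  · exact Or.inr (Or.inr (Or.inl hfull))
  by_cases hmixed : ∃ i < r, 0 < c i ∧ ∃ j ≤ c i + 1, L i j ∈ Δ
  · obtain ⟨i, hi, hci, a, ha, haΔ⟩ := hmixed
    obtain ⟨b, hb, hbΔ⟩ : ∃ j ≤ c i + 1, L i j ∉ Δ := by push Not at hfull; exact hfull i hi hci
    simpa only [hπ] using Or.inr (Or.inl
      (hvanish.row_eq_zero_of_mixed_block hi ha hb ((hπ _).2 haΔ) (mt (hπ _).1 hbΔ)))
  push Not at hmixed
  have hne : ∀ i < r, 0 < c i → ∀ j ≤ c i + 1, π (L i j) ≠ 0 :=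
    fun i hi hci j hj => mt (hπ _).1 (hmixed i hi hci j hj)
  obtain ⟨α, hα, hgeom⟩ := hvanish.exists_eq_pow_smul hi₀ hc₀ (hπhom i₀ hi₀ 0 (by omega))
    (hπhom i₀ hi₀ 1 (by omega)) (hne i₀ hi₀ hc₀ 0 (by omega)) (hne i₀ hi₀ hc₀ 1 (by omega))
  have hsub : ∀ i < r, ∀ j ≤ c i + 1, L i j - α ^ j • π (L i 0) ∈ Δ := fun i hi j hj => by
    rw [← map_smul, Submodule.sub_projection_mem_iff, map_smul, hgeom i hi j hj]
  refine Or.inr (Or.inr (Or.inr ⟨⟨i₀, hi₀, hc₀⟩, hmixed, α, hα, fun i hi hci => ?_,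
    fun i hi _ => ?_⟩))
  · exact ⟨π (L i 0), hπhom i hi 0 (by omega),
      (Submodule.projection_apply_mem_right_iff hQ _).not.2 (hne i hi hci 0 (by omega)), hsub i hi⟩
  · exact ⟨π (L i 0), hπhom i hi 0 (by omega),
      or_iff_not_imp_left.2 (mt (Submodule.projection_apply_mem_right_iff hQ _).1),
      Submodule.sub_projection_mem hQ _, by simpa using hsub i hi 1 (by omega)⟩

/-- **Proposition 2.4.** Let `B` be a scroll matrix made of blocks `B_1,…,B_r`, where block
`B_i` has rows `(L_{i,0},…,L_{i,c_i})` and `(L_{i,1},…,L_{i,c_i+1})`, all entries being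
linearly independent linear forms (`B_i` is generic iff `c_i = 0`). If the ideal `M` of all
`2×2` minors of `B` is contained in the ideal generated by a subspace `Δ` of linear forms,
then: all blocks are generic; or a whole row of `B` lies in `Δ`; or some non-generic block
lies entirely in `Δ`; or no entry of a non-generic block lies in `Δ` and there is a single
`α ≠ 0` realizing a rank-one deformation on every block. -/
theorem scroll_matrix_in_linear_ideal (K : Type) [Field K] (n r : ℕ) (hr : 1 ≤ r)
    (c : ℕ → ℕ) (L : ℕ → ℕ → MvPolynomial (Fin n) K)
    (hhom : ∀ i < r, ∀ j ≤ c i + 1, (L i j).IsHomogeneous 1)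
    (hli : LinearIndependent K
      (fun p : Σ i : Fin r, Fin (c i.val + 2) => L p.1.val p.2.val))
    (M : Ideal (MvPolynomial (Fin n) K))
    (hM : M = Ideal.span {f | ∃ i i' j j' : ℕ, i < r ∧ i' < r ∧ j ≤ c i ∧ j' ≤ c i' ∧
        f = L i j * L i' (j' + 1) - L i (j + 1) * L i' j'})
    (Δ : Submodule K (MvPolynomial (Fin n) K))
    (hΔ : ∀ f ∈ Δ, f.IsHomogeneous 1)
    (hMΔ : M ≤ Ideal.span (Δ : Set (MvPolynomial (Fin n) K))) :
    (∀ i < r, c i = 0) ∨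
    ((∀ i < r, ∀ j ≤ c i, L i j ∈ Δ) ∨ (∀ i < r, ∀ j, 1 ≤ j → j ≤ c i + 1 → L i j ∈ Δ)) ∨
    (∃ i < r, 0 < c i ∧ ∀ j ≤ c i + 1, L i j ∈ Δ) ∨
    ((∃ i < r, 0 < c i) ∧ (∀ i < r, 0 < c i → ∀ j ≤ c i + 1, L i j ∉ Δ) ∧
      ∃ α : K, α ≠ 0 ∧
        (∀ i < r, 0 < c i → ∃ H : MvPolynomial (Fin n) K, H.IsHomogeneous 1 ∧ H ∉ Δ ∧
          ∀ j ≤ c i + 1, L i j - α ^ j • H ∈ Δ) ∧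
        (∀ i < r, c i = 0 → ∃ H : MvPolynomial (Fin n) K, H.IsHomogeneous 1 ∧
          (H = 0 ∨ H ∉ Δ) ∧ L i 0 - H ∈ Δ ∧ L i 1 - α • H ∈ Δ)) :=
  scroll_matrix_in_linear_ideal_general K n r c L hhom M hM Δ hΔ hMΔ
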